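/- arXiv:1805.01329 — 3 statements merged into one kernel-verified Lean document; each statement's English description precedes it below -/
import Mathlib

section
/- Let f: ℕ → ℝ≥0 be any function and let T be a bifurcating tree. Then 𝔠_{MDM,f}(T) = ((f(0)+f(2))/2)·C(T) and 𝔠_{sd,f}(T) = ((f(0)+f(2))/√2)·C(T). -/
/-- Rooted trees encoded as a root together with the list of subtrees
rooted at its children. -/
inductive MTree : Type
  | node : List MTree → MTree

namespace MTree

/-- Number of leaves of a tree (a single node counts as one leaf). -/
def leafCount : MTree → ℕ
  | node ts => max 1 (ts.attach.map (fun x => leafCount x.1)).sum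
decreasing_by
  have := List.sizeOf_lt_of_mem x.2
  simp only [node.sizeOf_spec]; omega

/-- `deltaF f T = Σ_{v ∈ V(T)} f (deg v)`, the `f`-size of `T`. -/
noncomputable def deltaF (f : ℕ → ℝ) : MTree → ℝ
  | node ts => f ts.length + (ts.attach.map (fun x => deltaF f x.1)).sum
decreasing_by
  have := List.sizeOf_lt_of_mem x.2
  simp only [node.sizeOf_spec]; omega

/-- The Colless-like index relative to a "dissimilarity" `D` and a function `f`:
the sum, over all internal nodes `v`, of `D` applied to the list of `f`-sizes of
the subtrees rooted at the children of `v`. -/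
noncomputable def cIndex (D : List ℝ → ℝ) (f : ℕ → ℝ) : MTree → ℝ
  | node ts => (if ts.isEmpty then 0 else D (ts.map (deltaF f)))
      + (ts.attach.map (fun x => cIndex D f x.1)).sum
decreasing_by
  have := List.sizeOf_lt_of_mem x.2
  simp only [node.sizeOf_spec]; omega

/-- The Colless index of a (bifurcating) tree: the sum over the internal nodes of the
absolute value of the difference of the numbers of leaves of the two child subtrees. -/
def colless : MTree → ℕ
  | node ts =>
      (match ts with
       | [a, b] => ((a.leafCount : ℤ) - (b.leafCount : ℤ)).natAbs
       | _ => 0)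
      + (ts.attach.map (fun x => colless x.1)).sum
decreasing_by
  have := List.sizeOf_lt_of_mem x.2
  simp only [node.sizeOf_spec]; omega

/-- The quadratic Colless index of a (bifurcating) tree. -/
def collessSq : MTree → ℕ
  | node ts =>
      (match ts with
       | [a, b] => ((a.leafCount : ℤ) - (b.leafCount : ℤ)).natAbs ^ 2
       | _ => 0)
      + (ts.attach.map (fun x => collessSq x.1)).sum
decreasing_by
  have := List.sizeOf_lt_of_mem x.2
  simp only [node.sizeOf_spec]; omega

/-- A tree in the sense of the paper: no node of out-degree 1. -/
inductive WellFormed : MTree → Prop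
  | node {ts : List MTree} : ts.length ≠ 1 → (∀ t ∈ ts, WellFormed t) →
      WellFormed (node ts)

/-- A bifurcating tree: every internal node has out-degree exactly 2. -/
inductive Bifurcating : MTree → Prop
  | node {ts : List MTree} : (ts.length = 0 ∨ ts.length = 2) →
      (∀ t ∈ ts, Bifurcating t) → Bifurcating (node ts)

/-- Isomorphism of (list-encoded) trees: the lists of child subtrees match up to
a permutation and recursively isomorphic subtrees. -/
inductive Iso : MTree → MTree → Prop
  | node {ts us vs : List MTree} :
      List.Forall₂ Iso ts vs → vs.Perm us → Iso (node ts) (node us)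

/-- A tree is fully symmetric when, for every internal node, the subtrees rooted at
its children are pairwise isomorphic. -/
inductive FullySymmetric : MTree → Prop
  | node {ts : List MTree} : (∀ s ∈ ts, ∀ t ∈ ts, Iso s t) →
      (∀ t ∈ ts, FullySymmetric t) → FullySymmetric (node ts)

/-- The comb `K_n` with `n ≥ 1` leaves. -/
def comb : ℕ → MTree
  | 0 => node []
  | 1 => node []
  | n + 2 => node [node [], comb (n + 1)]

/-- The star `FS_n`, whose root has `n` children, all of them leaves. -/
def star (n : ℕ) : MTree := node (List.replicate n (node []))

/-- The median of a list of real numbers. -/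
noncomputable def median (l : List ℝ) : ℝ :=
  let s := l.mergeSort (fun a b => a ≤ b)
  if l.length % 2 = 1 then s.getD (l.length / 2) 0
  else (s.getD (l.length / 2 - 1) 0 + s.getD (l.length / 2) 0) / 2

/-- The mean deviation from the median of a list of real numbers. -/
noncomputable def MDM (l : List ℝ) : ℝ :=
  (l.map (fun x => |x - median l|)).sum / l.length

/-- The sample variance of a list of real numbers. -/
noncomputable def svar (l : List ℝ) : ℝ :=
  (l.map (fun x => (x - l.sum / l.length) ^ 2)).sum / ((l.length : ℝ) - 1)

/-- The sample standard deviation of a list of real numbers. -/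
noncomputable def ssd (l : List ℝ) : ℝ := Real.sqrt (svar l)

end MTree

/-!
A bifurcating tree with `n` leaves has `n - 1` internal nodes, so its `f`-size is
`(f 0 + f 2) n - f 2`. Hence at every internal node the `f`-sizes of the two children differ by
`f 0 + f 2` times the difference of their leaf counts, while on two values the mean deviation
from the median and the sample standard deviation are `|x - y| / 2` and `|x - y| / √2`.
-/

namespace MTree

@[elab_as_elim]
theorem Bifurcating.induction {motive : MTree → Prop} {T : MTree} (hT : Bifurcating T)
    (leaf : motive (MTree.node []))
    (pair : ∀ a b, Bifurcating a → Bifurcating b → motive a → motive b →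
      motive (MTree.node [a, b])) : motive T := by
  induction hT with
  | node hlen hts ih =>
    rcases hlen with hlen | hlen
    · rwa [List.length_eq_zero_iff.1 hlen]
    · obtain ⟨a, b, rfl⟩ := List.length_eq_two.1 hlen
      exact pair a b (hts a (by simp)) (hts b (by simp)) (ih a (by simp)) (ih b (by simp))

theorem median_pair (x y : ℝ) : median [x, y] = (x + y) / 2 := by
  have hsort : [x, y].mergeSort (fun a b => a ≤ b) = if x ≤ y then [x, y] else [y, x] := by
    rw [List.mergeSort]; split <;> simp_all
  by_cases hxy : x ≤ y <;> simp [median, hsort, hxy, add_comm]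

theorem MDM_pair (x y : ℝ) : MDM [x, y] = |x - y| / 2 := by
  have hx : x - (x + y) / 2 = (x - y) / 2 := by ring
  have hy : y - (x + y) / 2 = -((x - y) / 2) := by ring
  simp [MDM, median_pair, hx, hy, abs_div]

theorem svar_pair (x y : ℝ) : svar [x, y] = (x - y) ^ 2 / 2 := by
  simp [svar]; ring

theorem ssd_pair (x y : ℝ) : ssd [x, y] = |x - y| / Real.sqrt 2 := by
  rw [ssd, svar_pair, Real.sqrt_div' _ zero_le_two, Real.sqrt_sq_eq_abs]

theorem leafCount_pos (T : MTree) : 0 < T.leafCount := by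
  cases T with | node ts => rw [leafCount]; omega

@[simp] theorem leafCount_leaf : (node []).leafCount = 1 := by
  simp [leafCount]

@[simp] theorem leafCount_pair (a b : MTree) :
    (node [a, b]).leafCount = a.leafCount + b.leafCount := by
  have := leafCount_pos a
  simp [leafCount]
  omega

@[simp] theorem deltaF_leaf (f : ℕ → ℝ) : deltaF f (node []) = f 0 := by
  simp [deltaF]

@[simp] theorem deltaF_pair (f : ℕ → ℝ) (a b : MTree) :
    deltaF f (node [a, b]) = f 2 + (deltaF f a + deltaF f b) := by
  simp [deltaF]

@[simp] theorem cIndex_leaf (D : List ℝ → ℝ) (f : ℕ → ℝ) : cIndex D f (node []) = 0 := by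
  simp [cIndex]

@[simp] theorem cIndex_pair (D : List ℝ → ℝ) (f : ℕ → ℝ) (a b : MTree) :
    cIndex D f (node [a, b]) = D [deltaF f a, deltaF f b] + (cIndex D f a + cIndex D f b) := by
  simp [cIndex]

@[simp] theorem colless_leaf : (node []).colless = 0 := by
  simp [colless]

@[simp] theorem colless_pair (a b : MTree) :
    (node [a, b]).colless =
      ((a.leafCount : ℤ) - b.leafCount).natAbs + (a.colless + b.colless) := by
  simp [colless]

theorem Bifurcating.deltaF_eq {T : MTree} (hT : T.Bifurcating) (f : ℕ → ℝ) :
    deltaF f T = (f 0 + f 2) * T.leafCount - f 2 := by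
  refine hT.induction (by simp) fun a b _ _ iha ihb => ?_
  rw [deltaF_pair, leafCount_pair, iha, ihb]
  push_cast
  ring

theorem Bifurcating.cIndex_eq {T : MTree} (hT : T.Bifurcating) {D : List ℝ → ℝ} {c : ℝ}
    (hD : ∀ x y, D [x, y] = |x - y| / c) (f : ℕ → ℝ) :
    cIndex D f T = |f 0 + f 2| / c * T.colless := by
  refine hT.induction (by simp) fun a b ha hb iha ihb => ?_
  have hdiff : deltaF f a - deltaF f b = (f 0 + f 2) * ((a.leafCount : ℝ) - b.leafCount) := by
    rw [ha.deltaF_eq, hb.deltaF_eq]; ring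
  rw [cIndex_pair, hD, hdiff, iha, ihb, colless_pair, abs_mul]
  push_cast [Nat.cast_natAbs]
  ring

end MTree

/-- On bifurcating trees, the Colless-like indices `𝔠_{MDM,f}` and `𝔠_{sd,f}` are
proportional to the Colless index, with factors `(f 0 + f 2)/2` and `(f 0 + f 2)/√2`. -/
theorem cIndex_MDM_sd_eq_colless (f : ℕ → ℝ) (hf : ∀ n, 0 ≤ f n)
    (T : MTree) (hT : T.Bifurcating) :
    MTree.cIndex MTree.MDM f T = (f 0 + f 2) / 2 * T.colless ∧
    MTree.cIndex MTree.ssd f T = (f 0 + f 2) / Real.sqrt 2 * T.colless := by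
  have hf02 : |f 0 + f 2| = f 0 + f 2 := abs_of_nonneg (add_nonneg (hf 0) (hf 2))
  rw [hT.cIndex_eq MTree.MDM_pair, hT.cIndex_eq MTree.ssd_pair, hf02]
  exact ⟨rfl, rfl⟩
end

section
/- For all integers k, l ≥ 1 and all integers n₁,…,n_k, m₁,…,m_l ≥ 2: if n₁⋯n_k + Σ_{i=1}^{k} (n₁⋯n_{i−1})·ln(nᵢ + e) = m₁⋯m_l + Σ_{j=1}^{l} (m₁⋯m_{j−1})·ln(m_j + e) (where the empty products n₁⋯n₀ and m₁⋯m₀ equal 1), then k = l and nᵢ = mᵢ for every i. In other words, the map (n₁,…,n_k) ↦ Δ_f(n₁,…,n_k) with f(n) = ln(n+e) is injective on tuples of integers ≥ 2; equivalently, non-isomorphic fully symmetric trees have different ln(n+e)-sizes. -/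
/-!
Unfolding `Δ(n :: t) = ln (n + e) + n · Δ(t)`, `Δ([]) = 1`, gives `exp Δ(n₁, …, n_k) = P(e)` for
the integer polynomial `P = X ^ (n₁⋯n_k) · ∏ᵢ (X + nᵢ) ^ (n₁⋯n_{i-1})`. As `e` is transcendental,
equal sizes force equal polynomials, hence equal root multiplicities: `0` has multiplicity
`n₁⋯n_k` and `-j` has multiplicity `∑_{nᵢ = j} n₁⋯n_{i-1}`. These determine the tuple from the
back: the last entry `z` is the only `j` whose multiplicity reaches `n₁⋯n_{k-1}`, since the
weights of all earlier occurrences add up to less than that.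
-/

open Polynomial Finset Filter Topology Complex
open scoped Nat

theorem exists_prime_mul_pow_div_factorial_lt (A c : ℝ) (N : ℕ) :
    ∃ p, p.Prime ∧ N < p ∧ A * (c ^ p / (p - 1)!) < 1 := by
  have h : Tendsto (fun q : ℕ => A * c * (c ^ q / q !)) atTop (𝓝 0) := by
    simpa using (FloorSemiring.tendsto_pow_div_factorial_atTop c).const_mul (A * c)
  obtain ⟨Q, hQ⟩ := eventually_atTop.mp (h.eventually (gt_mem_nhds one_pos))
  obtain ⟨p, hpQ, hp⟩ := Nat.exists_infinite_primes (max Q N + 1)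
  refine ⟨p, hp, by omega, ?_⟩
  obtain ⟨q, rfl⟩ : ∃ q, p = q + 1 := ⟨p - 1, by omega⟩
  calc A * (c ^ (q + 1) / (q + 1 - 1)!) = A * c * (c ^ q / q !) := by
        rw [Nat.add_sub_cancel, pow_succ]; ring
    _ < 1 := hQ q (by omega)

theorem eval_zero_prod_X_sub_succ_ne_zero (n : ℕ) :
    (∏ i ∈ range n, (X - C ((i : ℤ) + 1))).eval 0 ≠ 0 := by
  simp only [eval_prod, eval_sub, eval_X, eval_C, prod_ne_zero_iff]
  intro i _
  omega

theorem succ_mem_aroots_prod_X_sub_succ {n i : ℕ} (hi : i ∈ range n) :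
    ((i : ℂ) + 1) ∈ (∏ i ∈ range n, (X - C ((i : ℤ) + 1))).aroots ℂ := by
  rw [mem_aroots, map_prod]
  refine ⟨(monic_prod_of_monic _ _ fun j _ => monic_X_sub_C _).ne_zero, prod_eq_zero hi ?_⟩
  simp

/-- Hermite's argument: approximating `N eᵏ ≈ p gₚ(k)` for `k = 1, …, deg g` turns `g(e) = 0`
into an integer that is prime to `p` but has absolute value less than `1`. -/
theorem aeval_exp_one_ne_zero_of_coeff_zero_ne_zero {g : ℤ[X]} (hg : g.coeff 0 ≠ 0) :
    aeval (cexp 1) g ≠ 0 := by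
  intro hge
  set n := g.natDegree
  set f : ℤ[X] := ∏ i ∈ range n, (X - C ((i : ℤ) + 1))
  obtain ⟨c, hc⟩ :=
    LindemannWeierstrass.exp_polynomial_approx f (eval_zero_prod_X_sub_succ_ne_zero n)
  obtain ⟨p, hp, hpbig, hsmall⟩ := exists_prime_mul_pow_div_factorial_lt
    (∑ i ∈ range n, ‖(g.coeff (i + 1) : ℂ)‖) c (max (f.eval 0).natAbs (g.coeff 0).natAbs)
  obtain ⟨N, hpN, gp, -, happrox⟩ := hc p (by omega) hp
  set M : ℤ := N * g.coeff 0 + p * ∑ i ∈ range n, g.coeff (i + 1) * gp.eval ((i : ℤ) + 1)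
  have hM : ¬ (p : ℤ) ∣ M := by
    have hpz : Prime (p : ℤ) := Nat.prime_iff_prime_int.mp hp
    rw [dvd_add_left (dvd_mul_right _ _)]
    intro h
    rcases hpz.dvd_or_dvd h with h | h
    · exact hpN h
    · exact absurd (Nat.le_of_dvd (Int.natAbs_pos.mpr hg) (Int.natCast_dvd.mp h)) (by omega)
  have hMeq : (M : ℂ) = -∑ i ∈ range n, g.coeff (i + 1) *
      (N • cexp ((i : ℂ) + 1) - p • aeval ((i : ℂ) + 1) gp) := by
    have hexp : ∀ i : ℕ, cexp ((i : ℂ) + 1) = cexp 1 ^ (i + 1) := fun i => by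
      rw [← Complex.exp_nat_mul]; push_cast; ring_nf
    have hgp : ∀ i : ℕ, aeval ((i : ℂ) + 1) gp = ((gp.eval ((i : ℤ) + 1) : ℤ) : ℂ) := fun i => by
      simpa using aeval_algebraMap_apply_eq_algebraMap_eval (A := ℂ) ((i : ℤ) + 1) gp
    rw [aeval_eq_sum_range, sum_range_succ'] at hge
    simp only [hexp, hgp, M, zsmul_eq_mul, nsmul_eq_mul, mul_sub, sum_sub_distrib]
    push_cast
    simp_rw [mul_left_comm _ (N : ℂ), mul_left_comm _ (p : ℂ), ← mul_sum]
    simp only [zsmul_eq_mul, pow_zero, mul_one] at hge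
    linear_combination (N : ℂ) * hge
  have hMsmall : ‖(M : ℂ)‖ < 1 := by
    refine lt_of_le_of_lt ?_ hsmall
    rw [hMeq, norm_neg, sum_mul]
    refine (norm_sum_le _ _).trans (sum_le_sum fun i hi => ?_)
    rw [norm_mul]
    gcongr
    exact happrox (succ_mem_aroots_prod_X_sub_succ hi)
  rw [norm_intCast, ← Int.cast_abs, ← Int.cast_one, Int.cast_lt, Int.abs_lt_one_iff] at hMsmall
  exact hM (hMsmall ▸ dvd_zero _)

theorem transcendental_exp_one : Transcendental ℤ (Real.exp 1) := by
  rw [transcendental_iff]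
  intro g hg
  by_contra hg0
  obtain ⟨q, hgq, hq⟩ := exists_eq_pow_rootMultiplicity_mul_and_not_dvd g hg0 0
  rw [C_0, sub_zero] at hgq hq
  rw [X_dvd_iff] at hq
  have hgc : aeval (cexp 1) g = 0 := by
    rw [← ofReal_one, ← ofReal_exp, ← Complex.coe_algebraMap, aeval_algebraMap_apply, hg,
      map_zero]
  rw [hgq, map_mul, map_pow, aeval_X] at hgc
  exact aeval_exp_one_ne_zero_of_coeff_zero_ne_zero hq
    ((mul_eq_zero.mp hgc).resolve_left (pow_ne_zero _ (exp_ne_zero 1)))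

namespace FullySymmetricTree

noncomputable def size (f : ℕ → ℝ) : List ℕ → ℝ
  | [] => f 0
  | n :: t => f n + n * size f t

theorem size_eq_sum (f : ℕ → ℝ) (u : List ℕ) :
    size f u = u.prod * f 0 +
      ∑ i ∈ range u.length, ((u.take i).prod : ℝ) * f (u.getD i 0) := by
  induction u with
  | nil => simp [size]
  | cons n t ih =>
    rw [size, ih, List.length_cons, sum_range_succ']
    simp only [List.take_succ_cons, List.getD_cons_succ, List.prod_cons, List.take_zero,
      List.getD_cons_zero, List.prod_nil, Nat.cast_mul, Nat.cast_one, mul_add, mul_sum, mul_assoc]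
    ring

noncomputable def poly : List ℕ → ℤ[X]
  | [] => X
  | n :: t => (X + C (n : ℤ)) * poly t ^ n

theorem poly_monic (u : List ℕ) : (poly u).Monic := by
  induction u with
  | nil => exact monic_X
  | cons n t ih => exact (monic_X_add_C _).mul (ih.pow n)

theorem aeval_poly {x : ℝ} (hx : 0 < x) (u : List ℕ) :
    aeval x (poly u) = Real.exp (size (fun n => Real.log (n + x)) u) := by
  induction u with
  | nil => simp [poly, size, Real.exp_log hx]
  | cons n t ih =>
    rw [poly, size, map_mul, map_pow, ih, Real.exp_add, ← Real.exp_nat_mul,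
      Real.exp_log (by positivity)]
    simp [add_comm]

def weightedCount (j : ℕ) : List ℕ → ℕ
  | [] => 0
  | n :: t => (if j = n then 1 else 0) + n * weightedCount j t

theorem count_roots_poly (j : ℕ) (u : List ℕ) :
    (poly u).roots.count (-(j : ℤ)) = weightedCount j u + if j = 0 then u.prod else 0 := by
  induction u with
  | nil => simp [poly, weightedCount, Multiset.count_singleton]
  | cons n t ih =>
    rw [poly, roots_mul (poly_monic (n :: t)).ne_zero, roots_pow, Multiset.count_add,
      Multiset.count_nsmul, ih, roots_X_add_C]
    simp only [Multiset.count_singleton, neg_inj, Nat.cast_inj, weightedCount, List.prod_cons]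
    split_ifs <;> ring

theorem weightedCount_eq_zero {j : ℕ} {u : List ℕ} (h : j ∉ u) : weightedCount j u = 0 := by
  induction u with
  | nil => rfl
  | cons n t ih =>
    rw [List.mem_cons, not_or] at h
    simp [weightedCount, h.1, ih h.2]

theorem weightedCount_append_singleton (j z : ℕ) (t : List ℕ) :
    weightedCount j (t ++ [z]) = weightedCount j t + if j = z then t.prod else 0 := by
  induction t with
  | nil => simp [weightedCount]
  | cons n t ih =>
    simp only [List.cons_append, weightedCount, ih, List.prod_cons]
    split_ifs <;> ring

theorem weightedCount_lt_prod {j : ℕ} {u : List ℕ} (hu : ∀ i ∈ u, 2 ≤ i) :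
    weightedCount j u < u.prod := by
  induction u with
  | nil => simp [weightedCount]
  | cons n t ih =>
    have hn := hu n List.mem_cons_self
    have ht := ih fun i hi => hu i (List.mem_cons_of_mem n hi)
    rw [weightedCount, List.prod_cons]
    split_ifs <;> nlinarith

theorem eq_nil_of_prod_eq_one {u : List ℕ} (hu : ∀ i ∈ u, 2 ≤ i) (h : u.prod = 1) : u = [] := by
  cases u with
  | nil => rfl
  | cons n t =>
    rw [List.prod_cons] at h
    have := hu n List.mem_cons_self
    have := Nat.eq_one_of_mul_eq_one_right h
    omega

theorem eq_of_prod_eq_of_weightedCount_eq {u v : List ℕ} (hu : ∀ i ∈ u, 2 ≤ i)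
    (hv : ∀ i ∈ v, 2 ≤ i) (hprod : u.prod = v.prod)
    (hcount : ∀ j, weightedCount j u = weightedCount j v) : u = v := by
  induction u using List.reverseRecOn generalizing v with
  | nil => exact (eq_nil_of_prod_eq_one hv hprod.symm).symm
  | append_singleton t z ih =>
    rcases v.eq_nil_or_concat with rfl | ⟨s, w, rfl⟩
    · simpa using eq_nil_of_prod_eq_one hu hprod
    rw [List.concat_eq_append] at hv hprod hcount ⊢
    have ht : ∀ i ∈ t, 2 ≤ i := fun i hi => hu i (by simp [hi])
    have hs : ∀ i ∈ s, 2 ≤ i := fun i hi => hv i (by simp [hi])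
    have hz : 2 ≤ z := hu z (by simp)
    obtain rfl : z = w := by
      by_contra hzw
      have hcz := hcount z
      have hcw := hcount w
      simp only [weightedCount_append_singleton, ↓reduceIte, if_neg hzw,
        if_neg (Ne.symm hzw)] at hcz hcw
      have := weightedCount_lt_prod (j := z) hs
      have := weightedCount_lt_prod (j := w) ht
      omega
    have htp : t.prod = s.prod := by
      simp only [List.prod_append, List.prod_singleton] at hprod
      exact Nat.eq_of_mul_eq_mul_right (by omega) hprod
    rw [ih ht hs htp fun j => by simpa [weightedCount_append_singleton, htp] using hcount j]

theorem poly_injOn {u v : List ℕ} (hu : ∀ i ∈ u, 2 ≤ i) (hv : ∀ i ∈ v, 2 ≤ i)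
    (h : poly u = poly v) : u = v := by
  have hcount (j : ℕ) : weightedCount j u + (if j = 0 then u.prod else 0) =
      weightedCount j v + if j = 0 then v.prod else 0 := by
    rw [← count_roots_poly, ← count_roots_poly, h]
  have hprod : u.prod = v.prod := by
    simpa [weightedCount_eq_zero (fun h0 => by simpa using hu 0 h0),
      weightedCount_eq_zero (fun h0 => by simpa using hv 0 h0)] using hcount 0
  exact eq_of_prod_eq_of_weightedCount_eq hu hv hprod fun j => by simpa [hprod] using hcount j

end FullySymmetricTree

open FullySymmetricTree

theorem log_size_injective_general (ns ms : List ℕ)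
    (hns : ∀ i ∈ ns, 2 ≤ i) (hms : ∀ j ∈ ms, 2 ≤ j)
    (h : (ns.prod : ℝ) +
          ∑ i ∈ Finset.range ns.length,
            ((ns.take i).prod : ℝ) * Real.log ((ns.getD i 0 : ℝ) + Real.exp 1) =
        (ms.prod : ℝ) +
          ∑ j ∈ Finset.range ms.length,
            ((ms.take j).prod : ℝ) * Real.log ((ms.getD j 0 : ℝ) + Real.exp 1)) :
    ns = ms := by
  have hsize : size (fun n => Real.log (n + Real.exp 1)) ns =
      size (fun n => Real.log (n + Real.exp 1)) ms := by
    simpa [size_eq_sum] using h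
  have hpoly : aeval (Real.exp 1) (poly ns) = aeval (Real.exp 1) (poly ms) := by
    rw [aeval_poly (Real.exp_pos 1), aeval_poly (Real.exp_pos 1), hsize]
  refine poly_injOn hns hms (sub_eq_zero.mp ?_)
  exact transcendental_iff.mp transcendental_exp_one _ (by rw [map_sub, hpoly, sub_self])

/-- Non-isomorphic fully symmetric trees have different `ln(n+e)`-sizes: the map
`(n₁,…,n_k) ↦ n₁⋯n_k + Σᵢ (n₁⋯n_{i-1})·ln(nᵢ + e)` is injective on nonempty tuples of
integers `≥ 2`. -/
theorem log_size_injective (ns ms : List ℕ) (hnse : ns ≠ []) (hmse : ms ≠ [])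
    (hns : ∀ i ∈ ns, 2 ≤ i) (hms : ∀ j ∈ ms, 2 ≤ j)
    (h : (ns.prod : ℝ) +
          ∑ i ∈ Finset.range ns.length,
            ((ns.take i).prod : ℝ) * Real.log ((ns.getD i 0 : ℝ) + Real.exp 1) =
        (ms.prod : ℝ) +
          ∑ j ∈ Finset.range ms.length,
            ((ms.take j).prod : ℝ) * Real.log ((ms.getD j 0 : ℝ) + Real.exp 1)) :
    ns = ms :=
  log_size_injective_general ns ms hns hms h
end

section
/- Let f: ℕ → ℝ≥0 satisfy 0 < f(k) < f(k−1) + f(2) for every k ≥ 3. Then for every n ≥ 2 and every tree T with n leaves, 𝔠_{var,f}(T) ≤ ((f(0)+f(2))²/12)·(n−1)(n−2)(2n−3), with equality if and only if T is isomorphic to the comb K_n. Hence 𝔠_{var,f} attains its maximum on 𝒯*_n exactly at the comb. -/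
/-!
Put `s = f 0 + f 2` and `H x = (x - 1)(x - 2)(2x - 3)/12`, so that the bound is `s² H(n)`, and
argue by induction on the tree. Since `f k ≤ (k - 1) f 2`, the `f`-size of a tree with `m` leaves
lies between `f 0 + f 0 (m - 1)` and `f 0 + s (m - 1)`. At a root with two children with `p ≤ q`
leaves the balance value is therefore at most `s² (q - 1)² / 2`, and
`H(p + q) - H p - H q - (q - 1)²/2 = q (p - 1)(p + q - 2)/2` vanishes only for `p = 1`, i.e. when
one child is a leaf and the other is extremal. At a root with `k ≥ 3` children the sample variance
is at most the sum of squared deviations from `f 0` divided by `k - 1 ≥ 2`; as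
`H m + (m - 1)²/2 = H(m + 1)`, the index is then at most `s² ∑ H(mᵢ + 1) < s² H(∑ mᵢ)`.
-/

theorem List.Forall₂.map_eq_map {α β γ : Type*} {R : α → β → Prop} {g : α → γ} {h : β → γ}
    {l₁ : List α} {l₂ : List β} (hR : List.Forall₂ R l₁ l₂)
    (hg : ∀ a ∈ l₁, ∀ b, R a b → g a = h b) : l₁.map g = l₂.map h := by
  induction hR with
  | nil => rfl
  | cons hab _ ih =>
    simp only [List.map_cons, List.mem_cons, forall_eq_or_imp] at hg ⊢
    rw [hg.1 _ hab, ih hg.2]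

namespace MTree

@[elab_as_elim]
theorem ind {P : MTree → Prop} (node : ∀ ts, (∀ t ∈ ts, P t) → P (node ts)) (T : MTree) :
    P T :=
  MTree.rec (motive_1 := P) (motive_2 := fun ts => ∀ t ∈ ts, P t) node
    (fun _ h => absurd h List.not_mem_nil)
    (fun _ _ ht hts _ hu => (List.mem_cons.mp hu).elim (· ▸ ht) (hts _)) T

theorem leafCount_node (ts : List MTree) :
    leafCount (node ts) = max 1 (ts.map leafCount).sum := by
  simp [leafCount]

theorem deltaF_node (f : ℕ → ℝ) (ts : List MTree) :
    deltaF f (node ts) = f ts.length + (ts.map (deltaF f)).sum := by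
  simp [deltaF]

theorem cIndex_node (D : List ℝ → ℝ) (f : ℕ → ℝ) (ts : List MTree) :
    cIndex D f (node ts) =
      (if ts.isEmpty then 0 else D (ts.map (deltaF f))) + (ts.map (cIndex D f)).sum := by
  simp [cIndex]

theorem cIndex_node_of_ne_nil (D : List ℝ → ℝ) (f : ℕ → ℝ) {ts : List MTree} (hts : ts ≠ []) :
    cIndex D f (node ts) = D (ts.map (deltaF f)) + (ts.map (cIndex D f)).sum := by
  simp [cIndex_node, hts]

theorem one_le_leafCount (T : MTree) : 1 ≤ leafCount T := by
  cases T; rw [leafCount_node]; exact le_max_left _ _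

theorem length_le_sum_leafCount (ts : List MTree) : ts.length ≤ (ts.map leafCount).sum := by
  simpa using List.length_le_sum_of_one_le (ts.map leafCount) (by simp [one_le_leafCount])

theorem leafCount_node_of_ne_nil {ts : List MTree} (hts : ts ≠ []) :
    leafCount (node ts) = (ts.map leafCount).sum := by
  have := length_le_sum_leafCount ts
  have := List.length_pos_of_ne_nil hts
  rw [leafCount_node]
  omega

theorem cast_leafCount_node_of_ne_nil {ts : List MTree} (hts : ts ≠ []) :
    (leafCount (node ts) : ℝ) = (ts.map fun t => (leafCount t : ℝ)).sum := by
  rw [leafCount_node_of_ne_nil hts, Nat.cast_list_sum, List.map_map]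
  rfl

theorem eq_leaf_of_leafCount_eq_one {T : MTree} (hT : WellFormed T) (h : leafCount T = 1) :
    T = node [] := by
  obtain @⟨ts, hlen, -⟩ := hT
  rcases eq_or_ne ts [] with rfl | hts
  · rfl
  · have := length_le_sum_leafCount ts
    have := List.length_pos_of_ne_nil hts
    rw [leafCount_node_of_ne_nil hts] at h
    omega

theorem svar_perm {l l' : List ℝ} (h : l.Perm l') : svar l = svar l' := by
  rw [svar, svar, h.length_eq, h.sum_eq, (h.map _).sum_eq]

theorem sum_sq_sub_eq (l : List ℝ) (c : ℝ) :
    (l.map fun x => (x - c) ^ 2).sum = (l.map (· ^ 2)).sum - 2 * c * l.sum + l.length * c ^ 2 := by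
  induction l with
  | nil => simp
  | cons x t ih => simp only [List.map_cons, List.sum_cons, ih, List.length_cons]; push_cast; ring

theorem sum_sq_sub_mean_le (l : List ℝ) (c : ℝ) :
    (l.map fun x => (x - l.sum / l.length) ^ 2).sum ≤ (l.map fun x => (x - c) ^ 2).sum := by
  rcases eq_or_ne l [] with rfl | hl
  · simp
  have hk : (0 : ℝ) < l.length := by exact_mod_cast List.length_pos_of_ne_nil hl
  rw [sum_sq_sub_eq, sum_sq_sub_eq]
  set m := l.sum / l.length with hm
  have hS : l.sum = l.length * m := by rw [hm]; field_simp
  rw [hS]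
  nlinarith [mul_nonneg hk.le (sq_nonneg (m - c))]

theorem svar_le (l : List ℝ) (c : ℝ) :
    svar l ≤ (l.map fun x => (x - c) ^ 2).sum / ((l.length : ℝ) - 1) := by
  rcases eq_or_ne l [] with rfl | hl
  · simp [svar]
  have : (1 : ℝ) ≤ l.length := by exact_mod_cast List.length_pos_of_ne_nil hl
  exact div_le_div_of_nonneg_right (sum_sq_sub_mean_le l c) (by linarith)

theorem Iso.deltaF_eq (f : ℕ → ℝ) {T U : MTree} (h : Iso T U) : deltaF f T = deltaF f U := by
  induction T using ind generalizing U with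
  | node ts ih =>
    obtain @⟨_, us, vs, hR, hperm⟩ := h
    rw [deltaF_node, deltaF_node, hR.length_eq, hperm.length_eq,
      hR.map_eq_map fun t ht u htu => ih t ht htu, (hperm.map _).sum_eq]

theorem Iso.cIndex_eq {D : List ℝ → ℝ} (hD : ∀ l l' : List ℝ, l.Perm l' → D l = D l')
    (f : ℕ → ℝ) {T U : MTree} (h : Iso T U) : cIndex D f T = cIndex D f U := by
  induction T using ind generalizing U with
  | node ts ih =>
    obtain @⟨_, us, vs, hR, hperm⟩ := h
    have hempty : ts.isEmpty = us.isEmpty := by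
      rw [Bool.eq_iff_iff, List.isEmpty_iff_length_eq_zero, List.isEmpty_iff_length_eq_zero,
        hR.length_eq, hperm.length_eq]
    rw [cIndex_node, cIndex_node, hempty, hR.map_eq_map fun t _ u htu => htu.deltaF_eq f,
      hR.map_eq_map fun t ht u htu => ih t ht htu, (hperm.map _).sum_eq, hD _ _ (hperm.map _)]

theorem cIndex_svar_node_pair (f : ℕ → ℝ) (a b : MTree) :
    cIndex svar f (node [a, b]) =
      (deltaF f a - deltaF f b) ^ 2 / 2 + cIndex svar f a + cIndex svar f b := by
  simp [cIndex_node_of_ne_nil, svar_pair, add_assoc]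

/-- `(f 0 + f 2) ^ 2 * combPoly n` is the value of `𝔠_{var,f}` at the comb `K_n`. -/
noncomputable def combPoly (x : ℝ) : ℝ := (x - 1) * (x - 2) * (2 * x - 3) / 12

theorem combPoly_one : combPoly 1 = 0 := by norm_num [combPoly]

theorem combPoly_add_one (x : ℝ) : combPoly (x + 1) = combPoly x + (x - 1) ^ 2 / 2 := by
  unfold combPoly; ring

theorem combPoly_add_sub (x y : ℝ) :
    combPoly (x + y) - combPoly x - combPoly y - (y - 1) ^ 2 / 2 =
      y * (x - 1) * (x + y - 2) / 2 := by
  unfold combPoly; ring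

theorem combPoly_add_one_add_le {x y : ℝ} (hx : 1 ≤ x) (hy : 0 ≤ y) :
    combPoly (x + 1) + combPoly (y + 1) ≤ combPoly (x + y + 1) := by
  have : combPoly (x + y + 1) - combPoly (x + 1) - combPoly (y + 1) = x * y * (x + y - 1) / 2 := by
    unfold combPoly; ring
  nlinarith [mul_nonneg (mul_nonneg (by linarith : 0 ≤ x) hy) (by linarith : 0 ≤ x + y - 1)]

theorem sum_combPoly_add_one_le {l : List ℝ} (hl : ∀ x ∈ l, 1 ≤ x) :
    (l.map fun x => combPoly (x + 1)).sum ≤ combPoly (l.sum + 1) := by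
  induction l with
  | nil => simp [combPoly_one]
  | cons x t ih =>
    simp only [List.mem_cons, forall_eq_or_imp] at hl
    have ht : 0 ≤ t.sum := List.sum_nonneg fun y hy => by linarith [hl.2 y hy]
    simp only [List.map_cons, List.sum_cons]
    linarith [ih hl.2, combPoly_add_one_add_le hl.1 ht]

theorem combPoly_add_one_add_add_one_lt {x y z : ℝ} (hx : 1 ≤ x) (hy : 1 ≤ y) (hz : 1 ≤ z) :
    combPoly (x + 1) + combPoly (y + 1) + combPoly (z + 1) < combPoly (x + y + z) := by
  have : combPoly (x + y + z) - combPoly (x + 1) - combPoly (y + 1) - combPoly (z + 1)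
      = x * y * (x + y - 1) / 2 + (x + y - 1) * (z - 1) * (x + y + z - 1) / 2 := by
    unfold combPoly; ring
  nlinarith [mul_pos (mul_pos (by linarith : (0 : ℝ) < x) (by linarith : (0 : ℝ) < y))
      (by linarith : (0 : ℝ) < x + y - 1),
    mul_nonneg (mul_nonneg (by linarith : (0 : ℝ) ≤ x + y - 1) (by linarith : (0 : ℝ) ≤ z - 1))
      (by linarith : (0 : ℝ) ≤ x + y + z - 1)]

theorem sum_combPoly_add_one_lt {l : List ℝ} (hl : ∀ x ∈ l, 1 ≤ x) (h3 : 3 ≤ l.length) :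
    (l.map fun x => combPoly (x + 1)).sum < combPoly l.sum := by
  obtain ⟨x, y, z, t, rfl⟩ : ∃ x y z t, l = x :: y :: z :: t := by
    match l, h3 with
    | x :: y :: z :: t, _ => exact ⟨x, y, z, t, rfl⟩
  simp only [List.mem_cons, forall_eq_or_imp] at hl
  have hzt := sum_combPoly_add_one_le (l := z :: t) (by simpa using hl.2.2)
  have hsum : 1 ≤ (z :: t).sum := by
    rw [List.sum_cons]
    linarith [hl.2.2.1, List.sum_nonneg fun w hw => by linarith [hl.2.2.2 w hw]]
  have := combPoly_add_one_add_add_one_lt hl.1 hl.2.1 hsum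
  simp only [List.map_cons, List.sum_cons, add_assoc] at hzt this ⊢
  linarith

section Bounds

variable {f : ℕ → ℝ}

theorem le_mul_f_two (hf : ∀ k, 3 ≤ k → f k ≤ f (k - 1) + f 2) {k : ℕ} (hk : 2 ≤ k) :
    f k ≤ ((k : ℝ) - 1) * f 2 := by
  induction k, hk using Nat.le_induction with
  | base => norm_num
  | succ k hk ih =>
    have := hf (k + 1) (by omega)
    rw [Nat.add_sub_cancel] at this
    push_cast
    linarith

theorem f_zero_mul_leafCount_le_deltaF (hf0 : ∀ n, 0 ≤ f n) (T : MTree) :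
    f 0 * leafCount T ≤ deltaF f T := by
  induction T using ind with
  | node ts ih =>
    rw [deltaF_node]
    rcases eq_or_ne ts [] with rfl | hts
    · simp [leafCount_node]
    have hsum : (ts.map fun t => f 0 * (leafCount t : ℝ)).sum ≤ (ts.map (deltaF f)).sum :=
      List.sum_le_sum ih
    rw [List.sum_map_mul_left, ← cast_leafCount_node_of_ne_nil hts] at hsum
    linarith [hf0 ts.length]

theorem deltaF_le (hf : ∀ k, 3 ≤ k → f k ≤ f (k - 1) + f 2) {T : MTree} (hT : WellFormed T) :
    deltaF f T ≤ (f 0 + f 2) * leafCount T - f 2 := by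
  induction T using ind with
  | node ts ih =>
    obtain @⟨_, hlen, hwf⟩ := hT
    rw [deltaF_node]
    rcases eq_or_ne ts [] with rfl | hts
    · simp [leafCount_node]
    have hk : 2 ≤ ts.length := by have := List.length_pos_of_ne_nil hts; omega
    have hsum : (ts.map (deltaF f)).sum ≤
        (ts.map fun t => (f 0 + f 2) * (leafCount t : ℝ) + -f 2).sum :=
      List.sum_le_sum fun t ht => by linarith [ih t ht (hwf t ht)]
    rw [List.sum_map_add, List.sum_map_mul_left, ← cast_leafCount_node_of_ne_nil hts,
      List.map_const', List.sum_replicate, nsmul_eq_mul] at hsum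
    have : (2 : ℝ) ≤ ts.length := by exact_mod_cast hk
    nlinarith [le_mul_f_two hf hk]

theorem deltaF_sub_f_zero_mem_Icc (hf0 : ∀ n, 0 ≤ f n) (hf : ∀ k, 3 ≤ k → f k ≤ f (k - 1) + f 2)
    {T : MTree} (hT : WellFormed T) :
    deltaF f T - f 0 ∈ Set.Icc 0 ((f 0 + f 2) * ((leafCount T : ℝ) - 1)) := by
  have h1 : (1 : ℝ) ≤ leafCount T := by exact_mod_cast one_le_leafCount T
  have := f_zero_mul_leafCount_le_deltaF hf0 T
  have := deltaF_le hf hT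
  constructor
  · nlinarith [hf0 0]
  · linarith

theorem comb_succ {m : ℕ} (hm : 1 ≤ m) : comb (m + 1) = node [node [], comb m] := by
  obtain ⟨j, rfl⟩ := Nat.exists_eq_add_of_le' hm
  rfl

theorem deltaF_comb {n : ℕ} (hn : 1 ≤ n) : deltaF f (comb n) = (f 0 + f 2) * n - f 2 := by
  induction n, hn using Nat.le_induction with
  | base => simp [comb, deltaF_node]
  | succ m hm ih =>
    rw [comb_succ hm, deltaF_node]
    simp only [deltaF_node, ih, List.map_cons, List.map_nil, List.sum_cons, List.sum_nil,
      List.length_cons, List.length_nil, Nat.cast_add, Nat.cast_one]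
    ring

theorem cIndex_svar_comb {n : ℕ} (hn : 1 ≤ n) :
    cIndex svar f (comb n) = (f 0 + f 2) ^ 2 * combPoly n := by
  induction n, hn using Nat.le_induction with
  | base => simp [comb, cIndex_node, combPoly_one]
  | succ m hm ih =>
    rw [comb_succ hm, cIndex_node_of_ne_nil _ _ (List.cons_ne_nil _ _)]
    simp only [cIndex_node, deltaF_node, deltaF_comb hm, ih, svar_pair, combPoly_add_one,
      List.map_cons, List.map_nil, List.sum_cons, List.sum_nil, List.length_nil, List.isEmpty_nil,
      if_true, Nat.cast_add, Nat.cast_one]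
    ring

theorem sq_deltaF_sub_le (hf0 : ∀ n, 0 ≤ f n) (hf : ∀ k, 3 ≤ k → f k ≤ f (k - 1) + f 2)
    {a b : MTree} (ha : WellFormed a) (hb : WellFormed b) (hab : leafCount a ≤ leafCount b) :
    (deltaF f a - deltaF f b) ^ 2 ≤ ((f 0 + f 2) * ((leafCount b : ℝ) - 1)) ^ 2 := by
  obtain ⟨ha0, ha1⟩ := deltaF_sub_f_zero_mem_Icc hf0 hf ha
  obtain ⟨hb0, hb1⟩ := deltaF_sub_f_zero_mem_Icc hf0 hf hb
  have hle : (f 0 + f 2) * ((leafCount a : ℝ) - 1) ≤ (f 0 + f 2) * ((leafCount b : ℝ) - 1) :=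
    mul_le_mul_of_nonneg_left (by gcongr) (add_nonneg (hf0 0) (hf0 2))
  have habs := abs_sub_le_of_nonneg_of_le ha0 (ha1.trans hle) hb0 hb1
  rw [sub_sub_sub_cancel_right] at habs
  exact sq_le_sq' (abs_le.mp habs).1 (abs_le.mp habs).2

theorem svar_deltaF_le (hf0 : ∀ n, 0 ≤ f n) (hf : ∀ k, 3 ≤ k → f k ≤ f (k - 1) + f 2)
    {ts : List MTree} (hwf : ∀ t ∈ ts, WellFormed t) (h3 : 3 ≤ ts.length) :
    svar (ts.map (deltaF f)) ≤
      (ts.map fun t => (f 0 + f 2) ^ 2 * (((leafCount t : ℝ) - 1) ^ 2 / 2)).sum := by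
  have hk : (2 : ℝ) ≤ (ts.length : ℝ) - 1 := by
    have : (3 : ℝ) ≤ ts.length := by exact_mod_cast h3
    linarith
  have hsq : ∀ t ∈ ts, (deltaF f t - f 0) ^ 2 ≤ (f 0 + f 2) ^ 2 * ((leafCount t : ℝ) - 1) ^ 2 :=
    fun t ht => by
      obtain ⟨h0, h1⟩ := deltaF_sub_f_zero_mem_Icc hf0 hf (hwf t ht)
      rw [← mul_pow]
      exact pow_le_pow_left₀ h0 h1 2
  calc svar (ts.map (deltaF f))
      ≤ (ts.map fun t => (deltaF f t - f 0) ^ 2).sum / ((ts.length : ℝ) - 1) := by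
        simpa only [List.map_map, Function.comp_def, List.length_map] using
          svar_le (ts.map (deltaF f)) (f 0)
    _ ≤ (ts.map fun t => (deltaF f t - f 0) ^ 2).sum / 2 :=
        div_le_div_of_nonneg_left (List.sum_nonneg (by simp [sq_nonneg])) two_pos hk
    _ = (ts.map fun t => (deltaF f t - f 0) ^ 2 / 2).sum := by
        simp only [div_eq_mul_inv, List.sum_map_mul_right]
    _ ≤ _ := List.sum_le_sum fun t ht => by linarith [hsq t ht]

theorem cIndex_svar_node_lt (hf0 : ∀ n, 0 ≤ f n) (hs : 0 < f 0 + f 2)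
    (hf : ∀ k, 3 ≤ k → f k ≤ f (k - 1) + f 2) {ts : List MTree}
    (hwf : ∀ t ∈ ts, WellFormed t) (h3 : 3 ≤ ts.length)
    (ih : ∀ t ∈ ts, cIndex svar f t ≤ (f 0 + f 2) ^ 2 * combPoly (leafCount t)) :
    cIndex svar f (node ts) < (f 0 + f 2) ^ 2 * combPoly (leafCount (node ts)) := by
  have hts : ts ≠ [] := by rintro rfl; simp at h3
  have hlt := sum_combPoly_add_one_lt (l := ts.map fun t => (leafCount t : ℝ))
    (by simp [one_le_leafCount]) (by simpa using h3)
  simp only [List.map_map, Function.comp_def] at hlt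
  rw [cIndex_node_of_ne_nil _ _ hts, cast_leafCount_node_of_ne_nil hts]
  calc svar (ts.map (deltaF f)) + (ts.map (cIndex svar f)).sum
      ≤ (ts.map fun t => (f 0 + f 2) ^ 2 * (((leafCount t : ℝ) - 1) ^ 2 / 2)).sum
        + (ts.map fun t => (f 0 + f 2) ^ 2 * combPoly (leafCount t)).sum :=
        add_le_add (svar_deltaF_le hf0 hf hwf h3) (List.sum_le_sum ih)
    _ = (f 0 + f 2) ^ 2 * (ts.map fun t => combPoly ((leafCount t : ℝ) + 1)).sum := by
        rw [← List.sum_map_add, ← List.sum_map_mul_left]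
        refine congrArg _ (List.map_congr_left fun t _ => ?_)
        rw [combPoly_add_one]
        ring
    _ < _ := mul_lt_mul_of_pos_left hlt (by positivity)

theorem cIndex_svar_node_pair_le (hf0 : ∀ n, 0 ≤ f n) (hs : 0 < f 0 + f 2)
    (hf : ∀ k, 3 ≤ k → f k ≤ f (k - 1) + f 2) {a b : MTree} (ha : WellFormed a)
    (hb : WellFormed b) (hab : leafCount a ≤ leafCount b)
    (iha : cIndex svar f a ≤ (f 0 + f 2) ^ 2 * combPoly (leafCount a))
    (ihb : cIndex svar f b ≤ (f 0 + f 2) ^ 2 * combPoly (leafCount b)) :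
    cIndex svar f (node [a, b]) ≤
        (f 0 + f 2) ^ 2 * combPoly ((leafCount a : ℝ) + leafCount b) ∧
      (cIndex svar f (node [a, b]) =
          (f 0 + f 2) ^ 2 * combPoly ((leafCount a : ℝ) + leafCount b) →
        leafCount a = 1 ∧ cIndex svar f b = (f 0 + f 2) ^ 2 * combPoly (leafCount b)) := by
  have hp : (1 : ℝ) ≤ leafCount a := by exact_mod_cast one_le_leafCount a
  have hpq : (leafCount a : ℝ) ≤ leafCount b := by exact_mod_cast hab
  set p : ℝ := (leafCount a : ℝ) with hp_def
  set q : ℝ := (leafCount b : ℝ)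
  have hroot := sq_deltaF_sub_le hf0 hf ha hb hab
  have hgap := combPoly_add_sub p q
  have hslack : 0 ≤ (f 0 + f 2) ^ 2 * (q * (p - 1) * (p + q - 2) / 2) := by
    have : 0 ≤ q * (p - 1) * (p + q - 2) := by
      apply mul_nonneg (mul_nonneg _ _) _ <;> linarith
    positivity
  rw [cIndex_svar_node_pair]
  refine ⟨by nlinarith, fun heq => ⟨?_, by nlinarith⟩⟩
  have hzero : q * (p - 1) * (p + q - 2) = 0 := by
    have := pow_pos hs 2
    nlinarith
  have : p = 1 := by
    rcases mul_eq_zero.mp hzero with h | h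
    · rcases mul_eq_zero.mp h with h | h <;> linarith
    · linarith
  exact_mod_cast hp_def ▸ this

def CombBounded (f : ℕ → ℝ) (T : MTree) : Prop :=
  cIndex svar f T ≤ (f 0 + f 2) ^ 2 * combPoly (leafCount T) ∧
    (cIndex svar f T = (f 0 + f 2) ^ 2 * combPoly (leafCount T) → Iso T (comb (leafCount T)))

theorem combBounded_leaf : CombBounded f (node []) := by
  simp [CombBounded, cIndex_node, leafCount_node, combPoly_one, comb, Iso.node .nil (.refl _)]

theorem combBounded_node_pair (hf0 : ∀ n, 0 ≤ f n) (hs : 0 < f 0 + f 2)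
    (hf : ∀ k, 3 ≤ k → f k ≤ f (k - 1) + f 2) {a b : MTree} (ha : WellFormed a)
    (hb : WellFormed b) (iha : CombBounded f a) (ihb : CombBounded f b) :
    CombBounded f (node [a, b]) := by
  have hleaf : Iso (node []) (node []) := Iso.node .nil (.refl _)
  have hn : leafCount (node [a, b]) = leafCount a + leafCount b := by
    simp [leafCount_node_of_ne_nil]
  unfold CombBounded
  rw [hn, Nat.cast_add]
  rcases le_total (leafCount a) (leafCount b) with hab | hba
  · obtain ⟨hle, heq⟩ := cIndex_svar_node_pair_le hf0 hs hf ha hb hab iha.1 ihb.1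
    refine ⟨hle, fun h => ?_⟩
    obtain ⟨h1, hcb⟩ := heq h
    rw [h1, eq_leaf_of_leafCount_eq_one ha h1, add_comm, comb_succ (one_le_leafCount b)]
    exact Iso.node (.cons hleaf (.cons (ihb.2 hcb) .nil)) (.refl _)
  · obtain ⟨hle, heq⟩ := cIndex_svar_node_pair_le hf0 hs hf hb ha hba ihb.1 iha.1
    have hswap : cIndex svar f (node [a, b]) = cIndex svar f (node [b, a]) := by
      rw [cIndex_svar_node_pair, cIndex_svar_node_pair]
      ring
    rw [hswap, add_comm (leafCount a : ℝ)]
    refine ⟨hle, fun h => ?_⟩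
    obtain ⟨h1, hca⟩ := heq h
    rw [h1, eq_leaf_of_leafCount_eq_one hb h1, comb_succ (one_le_leafCount a)]
    exact Iso.node (.cons (iha.2 hca) (.cons hleaf .nil)) (.swap _ _ _)

theorem WellFormed.combBounded (hf0 : ∀ n, 0 ≤ f n) (hs : 0 < f 0 + f 2)
    (hf : ∀ k, 3 ≤ k → f k ≤ f (k - 1) + f 2) {T : MTree} (hT : WellFormed T) :
    CombBounded f T := by
  induction T using ind with
  | node ts ih =>
    obtain @⟨_, hlen, hwf⟩ := hT
    match ts, hlen, hwf, ih with
    | [], _, _, _ => exact combBounded_leaf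
    | [a, b], _, hwf, ih =>
      have ha := hwf a (by simp)
      have hb := hwf b (by simp)
      exact combBounded_node_pair hf0 hs hf ha hb (ih a (by simp) ha) (ih b (by simp) hb)
    | a :: b :: c :: t, _, hwf, ih =>
      have hlt := cIndex_svar_node_lt hf0 hs hf hwf (by simp) fun u hu => (ih u hu (hwf u hu)).1
      exact ⟨hlt.le, fun h => absurd h hlt.ne⟩

end Bounds

end MTree

theorem cIndex_var_le_comb_general (f : ℕ → ℝ) (hf0 : ∀ n, 0 ≤ f n)
    (hf : ∀ k, 3 ≤ k → 0 < f k ∧ f k < f (k - 1) + f 2)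
    (n : ℕ) (T : MTree) (hT : T.WellFormed) (hTn : T.leafCount = n) :
    MTree.cIndex MTree.svar f T ≤
      (f 0 + f 2) ^ 2 / 12 * ((n : ℝ) - 1) * ((n : ℝ) - 2) * (2 * (n : ℝ) - 3) ∧
    (MTree.cIndex MTree.svar f T =
        (f 0 + f 2) ^ 2 / 12 * ((n : ℝ) - 1) * ((n : ℝ) - 2) * (2 * (n : ℝ) - 3) ↔
      T.Iso (MTree.comb n)) := by
  subst hTn
  have hs : 0 < f 0 + f 2 := by linarith [hf0 0, hf 3 le_rfl]
  obtain ⟨hle, hiso⟩ := hT.combBounded hf0 hs fun k hk => (hf k hk).2.le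
  have hpoly : (f 0 + f 2) ^ 2 / 12 * ((T.leafCount : ℝ) - 1) * ((T.leafCount : ℝ) - 2) *
      (2 * (T.leafCount : ℝ) - 3) = (f 0 + f 2) ^ 2 * MTree.combPoly T.leafCount := by
    unfold MTree.combPoly; ring
  rw [hpoly]
  exact ⟨hle, hiso, fun h => (h.cIndex_eq (fun _ _ => MTree.svar_perm) f).trans
    (MTree.cIndex_svar_comb (MTree.one_le_leafCount T))⟩

/-- Theorem 18 for `D = var`: if `0 < f k < f (k-1) + f 2` for all `k ≥ 3`, then on
trees with `n ≥ 2` leaves the index `𝔠_{var,f}` is at most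
`(f 0 + f 2)²/12 · (n-1)(n-2)(2n-3)`, with equality exactly at the comb `K_n`. -/
theorem cIndex_var_le_comb (f : ℕ → ℝ) (hf0 : ∀ n, 0 ≤ f n)
    (hf : ∀ k, 3 ≤ k → 0 < f k ∧ f k < f (k - 1) + f 2)
    (n : ℕ) (hn : 2 ≤ n) (T : MTree) (hT : T.WellFormed) (hTn : T.leafCount = n) :
    MTree.cIndex MTree.svar f T ≤
      (f 0 + f 2) ^ 2 / 12 * ((n : ℝ) - 1) * ((n : ℝ) - 2) * (2 * (n : ℝ) - 3) ∧
    (MTree.cIndex MTree.svar f T =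
        (f 0 + f 2) ^ 2 / 12 * ((n : ℝ) - 1) * ((n : ℝ) - 2) * (2 * (n : ℝ) - 3) ↔
      T.Iso (MTree.comb n)) :=
  cIndex_var_le_comb_general f hf0 hf n T hT hTn
end
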